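/- Let f₁,…,fₙ be nonzero real numbers and let Zₙ be the tridiagonal matrix with (Zₙ)_{ii}=2fᵢ and (Zₙ)_{i,i±1}=−fᵢ. Then all eigenvalues of Zₙ are real and nonzero, the number of eigenvalues of Zₙ with positive real part equals the number of positive fᵢ, and the number with negative real part equals the number of negative fᵢ. -/

import Mathlib

/-!
Write `Z = D T` with `D = diag f` and `T` the second-difference matrix, which is positive
definite since `xᵀ T x = x₀² + ∑ (xₖ₊₁ - xₖ)² + xₙ₋₁²`. Factoring `T = Bᵀ B` with `B` invertible,
`Z = D Bᵀ B` has the same characteristic polynomial as the symmetric matrix `B D Bᵀ`, so its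
eigenvalues are real. Diagonalising `B D Bᵀ` orthogonally exhibits `diag(eigenvalues)` as congruent
to `D`, and Sylvester's law of inertia matches the signs; since no `fᵢ` vanishes, the positive
and negative eigenvalues then exhaust the spectrum.
-/

open Matrix Polynomial Finset

section Inertia

variable {ι : Type*} [Fintype ι]

lemma eq_zero_of_sum_mul_sq_eq {d e x y : ι → ℝ}
    (h : ∑ i, e i * x i ^ 2 = ∑ i, d i * y i ^ 2)
    (hx : ∀ i, 0 < e i → x i = 0) (hy : ∀ i, ¬ 0 < d i → y i = 0) : y = 0 := by
  have hterm_nonneg : ∀ i ∈ univ, 0 ≤ d i * y i ^ 2 := fun i _ => by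
    by_cases hd : 0 < d i
    · positivity
    · simp [hy i hd]
  have hlhs_nonpos : ∑ i, e i * x i ^ 2 ≤ 0 := sum_nonpos fun i _ => by
    by_cases he : 0 < e i
    · simp [hx i he]
    · exact mul_nonpos_of_nonpos_of_nonneg (not_lt.1 he) (sq_nonneg _)
  have hterm_zero := (sum_eq_zero_iff_of_nonneg hterm_nonneg).1
    (le_antisymm (h ▸ hlhs_nonpos) (sum_nonneg hterm_nonneg))
  funext i
  by_cases hd : 0 < d i
  · simpa [hd.ne'] using hterm_zero i (mem_univ i)
  · exact hy i hd

variable [DecidableEq ι]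

lemma dotProduct_diagonal_mulVec_self (d x : ι → ℝ) :
    x ⬝ᵥ (diagonal d *ᵥ x) = ∑ i, d i * x i ^ 2 := by
  simp only [dotProduct, mulVec_diagonal]
  exact sum_congr rfl fun i _ => by ring

lemma sum_mul_sq_eq_of_diagonal_eq {d e : ι → ℝ} {C : Matrix ι ι ℝ}
    (h : diagonal e = Cᵀ * diagonal d * C) (x : ι → ℝ) :
    ∑ i, e i * x i ^ 2 = ∑ i, d i * (C *ᵥ x) i ^ 2 := by
  rw [← dotProduct_diagonal_mulVec_self, ← dotProduct_diagonal_mulVec_self, h,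
    ← mulVec_mulVec, ← mulVec_mulVec, dotProduct_mulVec, vecMul_transpose]

/-- `x ↦ (x|_{e > 0}, (C x)|_{d ≤ 0})` is injective, which gives `|ι| ≤ #{e > 0} + #{d ≤ 0}`. -/
lemma card_pos_le_of_diagonal_eq {d e : ι → ℝ} {C : Matrix ι ι ℝ} (hC : IsUnit C)
    (h : diagonal e = Cᵀ * diagonal d * C) :
    #{i | 0 < d i} ≤ #{i | 0 < e i} := by
  let Φ : (ι → ℝ) →ₗ[ℝ] ({i // 0 < e i} → ℝ) × ({i // ¬ 0 < d i} → ℝ) :=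
    (LinearMap.funLeft ℝ ℝ Subtype.val).prod (LinearMap.funLeft ℝ ℝ Subtype.val ∘ₗ C.mulVecLin)
  have hΦ : Function.Injective Φ := by
    refine (injective_iff_map_eq_zero Φ).2 fun x hx => mulVec_injective_iff_isUnit.2 hC ?_
    simp only [Φ, Prod.ext_iff, funext_iff, LinearMap.prod_apply, LinearMap.coe_comp,
      Prod.fst_zero, Prod.snd_zero, Pi.zero_apply, Subtype.forall] at hx
    rw [mulVec_zero]
    exact eq_zero_of_sum_mul_sq_eq (sum_mul_sq_eq_of_diagonal_eq h x) hx.1 hx.2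
  have hdim := LinearMap.finrank_le_finrank_of_injective hΦ
  simp only [Module.finrank_prod, Module.finrank_fintype_fun_eq_card, Fintype.card_subtype] at hdim
  have := card_filter_add_card_filter_not (s := univ) (p := fun i => 0 < d i)
  simp only [card_univ] at this
  omega

theorem card_pos_eq_of_diagonal_eq {d e : ι → ℝ} {C : Matrix ι ι ℝ} (hC : IsUnit C)
    (h : diagonal e = Cᵀ * diagonal d * C) :
    #{i | 0 < d i} = #{i | 0 < e i} := by
  obtain ⟨u, rfl⟩ := hC
  refine le_antisymm (card_pos_le_of_diagonal_eq u.isUnit h)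
    (card_pos_le_of_diagonal_eq u⁻¹.isUnit ?_)
  calc diagonal d = (↑u * ↑u⁻¹ : Matrix ι ι ℝ)ᵀ * diagonal d * (↑u * ↑u⁻¹) := by simp
    _ = (↑u⁻¹ : Matrix ι ι ℝ)ᵀ * diagonal e * ↑u⁻¹ := by
      simp only [h, transpose_mul, Matrix.mul_assoc]

theorem card_neg_eq_of_diagonal_eq {d e : ι → ℝ} {C : Matrix ι ι ℝ} (hC : IsUnit C)
    (h : diagonal e = Cᵀ * diagonal d * C) :
    #{i | d i < 0} = #{i | e i < 0} := by
  have h_neg : diagonal (fun i => -e i) = Cᵀ * diagonal (fun i => -d i) * C := by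
    rw [← diagonal_neg, ← diagonal_neg, h, Matrix.mul_neg, Matrix.neg_mul]
  simpa only [neg_pos] using card_pos_eq_of_diagonal_eq hC h_neg

end Inertia

section DiagonalMulPosDef

variable {ι : Type*} [Fintype ι] [DecidableEq ι]

open scoped MatrixOrder in
lemma Matrix.PosDef.exists_isUnit_eq_transpose_mul_self {T : Matrix ι ι ℝ} (hT : T.PosDef) :
    ∃ B : Matrix ι ι ℝ, IsUnit B ∧ T = Bᵀ * B := by
  refine ⟨CFC.sqrt T, (CFC.isUnit_sqrt_iff T hT.posSemidef.nonneg).2 hT.isUnit, ?_⟩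
  rw [← conjTranspose_eq_transpose_of_trivial, (CFC.sqrt_nonneg T).posSemidef.isHermitian.eq,
    CFC.sqrt_mul_sqrt_self T hT.posSemidef.nonneg]

lemma Matrix.IsHermitian.exists_isUnit_transpose_mul_mul_eq_diagonal {A : Matrix ι ι ℝ}
    (hA : A.IsHermitian) :
    ∃ U : Matrix ι ι ℝ, IsUnit U ∧ Uᵀ * A * U = diagonal hA.eigenvalues :=
  ⟨hA.eigenvectorUnitary, Unitary.isUnit_coe, by
    simpa [← conjTranspose_eq_transpose_of_trivial, ← star_eq_conjTranspose] using
      hA.conjStarAlgAut_star_eigenvectorUnitary⟩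

lemma card_filter_pos_add_card_filter_neg (g : ι → ℝ) :
    #{i | 0 < g i} + #{i | g i < 0} = #{i | g i ≠ 0} := by
  rw [← card_union_of_disjoint (disjoint_filter.2 fun i _ h h' => (h.trans h').false), ← filter_or]
  exact congrArg card (filter_congr fun i _ => (ne_iff_lt_or_gt.trans or_comm).symm)

lemma roots_charpoly_map_complex_of_charpoly_eq_prod {Z : Matrix ι ι ℝ} {μ : ι → ℝ}
    (h : Z.charpoly = ∏ i, (X - C (μ i))) :
    (Z.map (algebraMap ℝ ℂ)).charpoly.roots = univ.val.map fun i => (μ i : ℂ) := by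
  rw [charpoly_map, h, Polynomial.map_prod, roots_prod]
  · simp
  · simp [prod_ne_zero_iff, X_sub_C_ne_zero]

theorem Matrix.PosDef.exists_charpoly_diagonal_mul_eq_prod_same_inertia {T : Matrix ι ι ℝ}
    (hT : T.PosDef) (f : ι → ℝ) :
    ∃ μ : ι → ℝ, (diagonal f * T).charpoly = ∏ i, (X - C (μ i)) ∧
      #{i | 0 < μ i} = #{i | 0 < f i} ∧ #{i | μ i < 0} = #{i | f i < 0} := by
  obtain ⟨B, hB, rfl⟩ := hT.exists_isUnit_eq_transpose_mul_self
  have hA : (B * diagonal f * Bᵀ).IsHermitian := by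
    simp [IsHermitian, conjTranspose_eq_transpose_of_trivial, Matrix.mul_assoc]
  obtain ⟨U, hU, hdiag⟩ := hA.exists_isUnit_transpose_mul_mul_eq_diagonal
  have hcongr : diagonal hA.eigenvalues = (Bᵀ * U)ᵀ * diagonal f * (Bᵀ * U) := by
    simp only [← hdiag, transpose_mul, transpose_transpose, Matrix.mul_assoc]
  have hBU : IsUnit (Bᵀ * U) := ((isUnit_transpose B).2 hB).mul hU
  refine ⟨hA.eigenvalues, ?_, (card_pos_eq_of_diagonal_eq hBU hcongr).symm,
    (card_neg_eq_of_diagonal_eq hBU hcongr).symm⟩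
  rw [← Matrix.mul_assoc, charpoly_mul_comm, ← Matrix.mul_assoc, hA.charpoly_eq]
  rfl

end DiagonalMulPosDef

def secondDifferenceMatrix (n : ℕ) : Matrix (Fin n) (Fin n) ℝ :=
  of fun i j => if j = i then 2 else if (j : ℕ) = i + 1 ∨ (j : ℕ) + 1 = i then -1 else 0

/-- The sequence `0, x 0, …, x (n - 1), 0, 0, …`: second differences of `x` without boundary
cases. -/
def zeroPad {n : ℕ} (x : Fin n → ℝ) (k : ℕ) : ℝ :=
  ∑ i : Fin n, if (i : ℕ) + 1 = k then x i else 0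

section zeroPad

variable {n : ℕ} (x : Fin n → ℝ)

@[simp]
lemma zeroPad_zero : zeroPad x 0 = 0 := by
  simp [zeroPad]

lemma zeroPad_succ (i : Fin n) : zeroPad x (i + 1) = x i := by
  simp [zeroPad, Fin.val_inj]

lemma zeroPad_eq_zero_of_lt {k : ℕ} (hk : n < k) : zeroPad x k = 0 :=
  sum_eq_zero fun i _ => if_neg (by omega)

end zeroPad

lemma secondDifferenceMatrix_mulVec {n : ℕ} (x : Fin n → ℝ) (i : Fin n) :
    (secondDifferenceMatrix n *ᵥ x) i
      = 2 * zeroPad x (i + 1) - zeroPad x i - zeroPad x (i + 2) := by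
  have hentry : ∀ j : Fin n, secondDifferenceMatrix n i j * x j
      = (if j = i then 2 * x j else 0) - (if (j : ℕ) + 1 = i then x j else 0)
        - (if (j : ℕ) + 1 = i + 2 then x j else 0) := fun j => by
    simp only [secondDifferenceMatrix, of_apply, Fin.ext_iff]
    split_ifs <;> first | ring1 | (exfalso; omega)
  rw [zeroPad_succ]
  simp only [mulVec, dotProduct, hentry, sum_sub_distrib, sum_ite_eq', mem_univ, if_true, zeroPad]

lemma sum_range_mul_second_difference (g : ℕ → ℝ) (n : ℕ) :
    ∑ k ∈ range n, g (k + 1) * (2 * g (k + 1) - g k - g (k + 2))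
      = ∑ k ∈ range n, (g (k + 1) - g k) ^ 2 + g 0 * (g 1 - g 0) - g n * (g (n + 1) - g n) := by
  induction n with
  | zero => simp
  | succ n ih => rw [sum_range_succ, ih, sum_range_succ]; ring

lemma dotProduct_secondDifferenceMatrix_mulVec {n : ℕ} (x : Fin n → ℝ) :
    x ⬝ᵥ (secondDifferenceMatrix n *ᵥ x)
      = ∑ k ∈ range n, (zeroPad x (k + 1) - zeroPad x k) ^ 2 + zeroPad x n ^ 2 := by
  have hsum := sum_range_mul_second_difference (zeroPad x) n
  rw [zeroPad_zero, zeroPad_eq_zero_of_lt x n.lt_succ_self] at hsum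
  rw [← Fin.sum_univ_eq_sum_range (fun k => zeroPad x (k + 1) * _)] at hsum
  simp only [zeroPad_succ] at hsum
  simp only [dotProduct, secondDifferenceMatrix_mulVec, zeroPad_succ]
  linear_combination hsum

theorem posDef_secondDifferenceMatrix (n : ℕ) : (secondDifferenceMatrix n).PosDef := by
  refine posDef_iff_dotProduct_mulVec.2 ⟨?_, fun x hx => ?_⟩
  · ext i j
    simp only [conjTranspose_apply, star_trivial, secondDifferenceMatrix, of_apply, Fin.ext_iff]
    split_ifs <;> first | rfl | omega
  rw [star_trivial, dotProduct_secondDifferenceMatrix_mulVec]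
  refine lt_of_le_of_ne (by positivity) fun hzero => hx ?_
  have hsteps := (sum_eq_zero_iff_of_nonneg fun k _ => sq_nonneg _).1
    ((add_eq_zero_iff_of_nonneg (sum_nonneg fun k _ => sq_nonneg _) (sq_nonneg _)).1
      hzero.symm).1
  have hvanish : ∀ k ≤ n, zeroPad x k = 0 := by
    intro k hk
    induction k with
    | zero => exact zeroPad_zero x
    | succ k ih =>
      have := hsteps k (mem_range.2 hk)
      rw [ih (by omega)] at this
      simpa using this
  funext i
  rw [← zeroPad_succ x i]
  exact hvanish _ i.isLt

lemma diagonal_mul_secondDifferenceMatrix {n : ℕ} (f : Fin n → ℝ) :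
    diagonal f * secondDifferenceMatrix n = of fun i j : Fin n =>
      if j = i then 2 * f i
      else if ((j : ℕ) = (i : ℕ) + 1 ∨ (j : ℕ) + 1 = (i : ℕ)) then -f i
      else 0 := by
  ext i j
  simp only [diagonal_mul, secondDifferenceMatrix, of_apply]
  split_ifs <;> ring

/-- For nonzero `f i`, all eigenvalues of the tridiagonal matrix `Z` (with
`Z i i = 2 f i`, `Z i (i±1) = -f i`) are real and nonzero; the number of
eigenvalues with positive real part equals the number of positive `f i`, and
the number with negative real part equals the number of negative `f i`. -/
theorem eigenvalues_sign_count_tridiagonal (n : ℕ) (f : Fin n → ℝ)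
    (hf : ∀ i, f i ≠ 0)
    (Z : Matrix (Fin n) (Fin n) ℝ)
    (hZ : Z = Matrix.of fun i j : Fin n =>
      if j = i then 2 * f i
      else if ((j : ℕ) = (i : ℕ) + 1 ∨ (j : ℕ) + 1 = (i : ℕ)) then -f i
      else 0) :
    (∀ z ∈ ((Z.map (algebraMap ℝ ℂ)).charpoly).roots, z.im = 0 ∧ z ≠ 0) ∧
    Multiset.card ((((Z.map (algebraMap ℝ ℂ)).charpoly).roots).filter
        (fun z => 0 < z.re)) =
      (Finset.univ.filter fun i => 0 < f i).card ∧
    Multiset.card ((((Z.map (algebraMap ℝ ℂ)).charpoly).roots).filter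
        (fun z => z.re < 0)) =
      (Finset.univ.filter fun i => f i < 0).card := by
  obtain ⟨μ, hchar, hpos, hneg⟩ :=
    (posDef_secondDifferenceMatrix n).exists_charpoly_diagonal_mul_eq_prod_same_inertia f
  rw [diagonal_mul_secondDifferenceMatrix, ← hZ] at hchar
  have hμ : ∀ i, μ i ≠ 0 := by
    have hcard : #{i | μ i ≠ 0} = #(univ : Finset (Fin n)) := by
      rw [← card_filter_pos_add_card_filter_neg, hpos, hneg, card_filter_pos_add_card_filter_neg,
        filter_true_of_mem fun i _ => hf i]
    exact fun i => filter_card_eq hcard i (mem_univ i)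
  rw [roots_charpoly_map_complex_of_charpoly_eq_prod hchar, Multiset.filter_map,
    Multiset.filter_map, Multiset.card_map, Multiset.card_map]
  refine ⟨fun z hz => ?_, ?_, ?_⟩
  · obtain ⟨i, -, rfl⟩ := Multiset.mem_map.1 hz
    exact ⟨Complex.ofReal_im _, Complex.ofReal_ne_zero.2 (hμ i)⟩
  · simp only [Function.comp_def, Complex.ofReal_re]
    exact hpos
  · simp only [Function.comp_def, Complex.ofReal_re]
    exact hneg
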